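/- Let n ∈ ℕ and let w be a word over T_n of length ℓ ≤ r_n. If n is sufficiently large, then the element of W_n represented by w can be written as p_1 p_2 p_3 p_4, where p_1 is represented by a word g_1 g_2 ⋯ g_ℓ over S_n ∪ {1}, and for each j ∈ {2,3,4}, p_j = (a_1^{(j)})^{g_1 g_2 ⋯ g_ℓ} (a_2^{(j)})^{g_2 ⋯ g_ℓ} ⋯ (a_ℓ^{(j)})^{g_ℓ}, where a_i^{(2)} ∈ Sym(4)_{η_n}, a_i^{(3)} ∈ {τ_n, 1}, and a_i^{(4)} ∈ {X_0^{(n)}, X_1^{(n)}, 1} (here x^h = h^{-1}xh). -/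

import Mathlib

noncomputable section

/-! ### Generalities: the group of self-homeomorphisms -/

instance homeoGroup {X : Type*} [TopologicalSpace X] : Group (X ≃ₜ X) where
  mul f g := g.trans f
  one := Homeomorph.refl X
  inv := Homeomorph.symm
  mul_assoc a b c := Homeomorph.ext fun _ => rfl
  one_mul a := Homeomorph.ext fun _ => rfl
  mul_one a := Homeomorph.ext fun _ => rfl
  inv_mul_cancel a := Homeomorph.ext a.symm_apply_apply

/-! ### Homeomorphisms of a product with a discrete factor -/

theorem cont_fibered {X Y Z : Type*} [TopologicalSpace X] [TopologicalSpace Y]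
    [DiscreteTopology Y] [TopologicalSpace Z] (f : X → Y → Z) (hf : ∀ y, Continuous (f · y)) :
    Continuous (fun p : X × Y => f p.1 p.2) := by
  rw [continuous_iff_continuousAt]
  rintro ⟨x, y⟩
  have hmem : {p : X × Y | p.2 = y} ∈ nhds (x, y) := by
    have ho : IsOpen {p : X × Y | p.2 = y} := by
      have h : ({p : X × Y | p.2 = y}) = Prod.snd ⁻¹' {y} := rfl
      rw [h]; exact (isOpen_discrete _).preimage continuous_snd
    exact ho.mem_nhds rfl
  refine ContinuousAt.congr (((hf y).comp continuous_fst).continuousAt) ?_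
  filter_upwards [hmem] with p hp
  simp [hp]

/-- The homeomorphism of `X × Y`, `Y` discrete, acting on each fiber `X × {y}`
by the homeomorphism `F y`. -/
def fiberedHomeo {X Y : Type*} [TopologicalSpace X] [TopologicalSpace Y] [DiscreteTopology Y]
    (F : Y → X ≃ₜ X) : (X × Y) ≃ₜ (X × Y) where
  toEquiv := Equiv.prodCongrLeft fun y => (F y).toEquiv
  continuous_toFun := by
    refine Continuous.prodMk ?_ continuous_snd
    exact cont_fibered (fun x y => F y x) (fun y => (F y).continuous)
  continuous_invFun := by
    refine Continuous.prodMk ?_ continuous_snd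
    exact cont_fibered (fun x y => (F y).symm x) (fun y => (F y).symm.continuous)

/-- The homeomorphism of `X × Y`, `Y` discrete, permuting the fibers according to a
permutation of `Y` and acting trivially in the `X`-coordinate. -/
def basePermHomeo {X Y : Type*} [TopologicalSpace X] [TopologicalSpace Y] [DiscreteTopology Y]
    (e : Equiv.Perm Y) : (X × Y) ≃ₜ (X × Y) where
  toEquiv := Equiv.prodCongr (Equiv.refl X) e
  continuous_toFun :=
    continuous_fst.prodMk (continuous_of_discreteTopology.comp continuous_snd)
  continuous_invFun :=
    continuous_fst.prodMk (continuous_of_discreteTopology.comp continuous_snd)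

/-! ### The Cantor set -/

/-- The Cantor set `{0,1}^ℕ`. -/
abbrev Cantor : Type := ℕ → Bool

/-- Prepending a finite word to an element of the Cantor set. -/
def wordAppend (w : List Bool) (ξ : Cantor) : Cantor :=
  fun n => if h : n < w.length then w[n] else ξ (n - w.length)

/-- A dyadic partition set: a finite set of binary words whose cylinders partition
the Cantor set. -/
def IsDyadicPartition (A : Finset (List Bool)) : Prop :=
  ∀ ξ : Cantor, ∃! w : List Bool, w ∈ A ∧ ∃ ξ' : Cantor, wordAppend w ξ' = ξ

/-- The defining condition for elements of Thompson's group `V`: a homeomorphism of the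
Cantor set given by prefix replacement along a bijection of two dyadic partition sets. -/
def IsThompsonVMap (γ : Cantor ≃ₜ Cantor) : Prop :=
  ∃ (A B : Finset (List Bool)) (f : List Bool → List Bool),
    IsDyadicPartition A ∧ IsDyadicPartition B ∧ A.card = B.card ∧ Set.BijOn f A B ∧
    ∀ w ∈ A, ∀ ξ : Cantor, γ (wordAppend w ξ) = wordAppend (f w) ξ

/-- Thompson's group `V`, as a group of homeomorphisms of the Cantor set. -/
def ThompsonV : Subgroup (Cantor ≃ₜ Cantor) :=
  Subgroup.closure {γ | IsThompsonVMap γ}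

theorem cantor_core_continuous (G : ℕ → Bool → Bool → Bool → Bool → Bool → Bool → Bool) :
    Continuous (fun ξ : Cantor =>
      (fun n => G n (ξ 0) (ξ 1) (ξ 2) (ξ (n - 1)) (ξ n) (ξ (n + 1)) : Cantor)) := by
  apply continuous_pi
  intro n
  have h : Continuous (fun ξ : Cantor =>
      ((ξ 0, ξ 1, ξ 2, ξ (n - 1), ξ n, ξ (n + 1)) : Bool × Bool × Bool × Bool × Bool × Bool)) :=
    (continuous_apply 0).prodMk ((continuous_apply 1).prodMk
      ((continuous_apply 2).prodMk ((continuous_apply (n-1)).prodMk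
      ((continuous_apply n).prodMk (continuous_apply (n+1))))))
  exact (continuous_of_discreteTopology
    (f := fun p : Bool × Bool × Bool × Bool × Bool × Bool =>
      G n p.1 p.2.1 p.2.2.1 p.2.2.2.1 p.2.2.2.2.1 p.2.2.2.2.2)).comp h

def consC (b : Bool) (ξ : Cantor) : Cantor := fun n => match n with
  | 0 => b
  | n+1 => ξ n

def shiftC (ξ : Cantor) : Cantor := fun n => ξ (n + 1)

theorem consC_continuous (b : Bool) : Continuous (consC b) := by
  apply continuous_pi
  intro n
  match n with
  | 0 => exact continuous_const
  | n+1 => exact continuous_apply n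

theorem shiftC_continuous : Continuous shiftC :=
  continuous_pi fun n => continuous_apply (n + 1)

/-! ### Thompson's generator `X₀` as a homeomorphism of the Cantor set -/

def x0core (n : ℕ) (b0 b1 : Bool) (w v u : Bool) : Bool :=
  if b0 = false then
    (if b1 = false then u
     else if n = 0 then true else if n = 1 then false else v)
  else (if n ≤ 1 then true else w)

def x0invcore (n : ℕ) (b0 b1 : Bool) (w v u : Bool) : Bool :=
  if b0 = false then (if n ≤ 1 then false else w)
  else if b1 = false then (if n = 0 then false else if n = 1 then true else v)
  else (if n = 0 then true else u)

/-- `X₀ : 00ξ ↦ 0ξ`, `01ξ ↦ 10ξ`, `1ξ ↦ 11ξ`. -/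
def x0fun (ξ : Cantor) : Cantor := fun n => x0core n (ξ 0) (ξ 1) (ξ (n - 1)) (ξ n) (ξ (n + 1))

def x0inv (ξ : Cantor) : Cantor := fun n => x0invcore n (ξ 0) (ξ 1) (ξ (n - 1)) (ξ n) (ξ (n + 1))

theorem x0_left_inv : Function.LeftInverse x0inv x0fun := by
  intro ξ
  funext n
  rcases hb0 : ξ 0 with _ | _ <;> rcases hb1 : ξ 1 with _ | _ <;>
    rcases n with _ | _ | n <;>
    simp [x0fun, x0inv, x0core, x0invcore, hb0, hb1]

theorem x0_right_inv : Function.RightInverse x0inv x0fun := by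
  intro ξ
  funext n
  rcases hb0 : ξ 0 with _ | _ <;> rcases hb1 : ξ 1 with _ | _ <;>
    rcases n with _ | _ | n <;>
    simp [x0fun, x0inv, x0core, x0invcore, hb0, hb1]

/-- Thompson's generator `X₀` as a homeomorphism of the Cantor set. -/
def X0c : Cantor ≃ₜ Cantor where
  toEquiv := ⟨x0fun, x0inv, x0_left_inv, x0_right_inv⟩
  continuous_toFun := cantor_core_continuous fun n b0 b1 _ w v u => x0core n b0 b1 w v u
  continuous_invFun := cantor_core_continuous fun n b0 b1 _ w v u => x0invcore n b0 b1 w v u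

/-- The homeomorphism `Cantor ≃ₜ Cantor × Bool` splitting off the first letter. -/
def splitHomeo : Cantor ≃ₜ Cantor × Bool where
  toEquiv := ⟨fun ξ => (shiftC ξ, ξ 0), fun p => consC p.2 p.1,
    fun ξ => by funext n; rcases n with _ | n <;> rfl,
    fun p => by
      refine Prod.ext ?_ rfl
      funext n; rfl⟩
  continuous_toFun := shiftC_continuous.prodMk (continuous_apply 0)
  continuous_invFun := by
    apply continuous_pi
    intro n
    match n with
    | 0 => exact continuous_snd
    | n+1 => exact (continuous_apply n).comp continuous_fst

/-- Thompson's generator `X₁ = 1X₀`: the copy of `X₀` supported on the cylinder `1C`. -/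
def X1c : Cantor ≃ₜ Cantor :=
  splitHomeo.trans ((fiberedHomeo fun b =>
    if b = true then X0c else Homeomorph.refl Cantor).trans splitHomeo.symm)

end

noncomputable section

/-! ### The Grigorchuk generators -/

namespace Grig

def aFun : List Bool → List Bool
  | [] => []
  | x :: w => (!x) :: w

mutual
  def bFun : List Bool → List Bool
    | [] => []
    | false :: w => false :: aFun w
    | true :: w => true :: cFun w
  def cFun : List Bool → List Bool
    | [] => []
    | false :: w => false :: aFun w
    | true :: w => true :: dFun w
  def dFun : List Bool → List Bool
    | [] => []
    | false :: w => false :: w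
    | true :: w => true :: bFun w
end

theorem aFun_involutive : Function.Involutive aFun := by
  intro w
  match w with
  | [] => rfl
  | x :: w => simp [aFun]

theorem bcd_involutive :
    ∀ w : List Bool, bFun (bFun w) = w ∧ cFun (cFun w) = w ∧ dFun (dFun w) = w := by
  intro w
  induction w with
  | nil => exact ⟨rfl, rfl, rfl⟩
  | cons x w ih =>
    rcases x with _ | _
    · simp [bFun, cFun, dFun, aFun_involutive w]
    · simp [bFun, cFun, dFun, ih.1, ih.2.1, ih.2.2]

theorem bFun_involutive : Function.Involutive bFun := fun w => (bcd_involutive w).1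
theorem cFun_involutive : Function.Involutive cFun := fun w => (bcd_involutive w).2.1
theorem dFun_involutive : Function.Involutive dFun := fun w => (bcd_involutive w).2.2

theorem aFun_length : ∀ w : List Bool, (aFun w).length = w.length := by
  intro w
  match w with
  | [] => rfl
  | x :: w => simp [aFun]

theorem bcd_length : ∀ w : List Bool,
    (bFun w).length = w.length ∧ (cFun w).length = w.length ∧ (dFun w).length = w.length := by
  intro w
  induction w with
  | nil => exact ⟨rfl, rfl, rfl⟩
  | cons x w ih =>
    rcases x with _ | _
    · simp [bFun, cFun, dFun, aFun_length w]
    · simp [bFun, cFun, dFun, ih.1, ih.2.1, ih.2.2]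

theorem bFun_length : ∀ w, (bFun w).length = w.length := fun w => (bcd_length w).1
theorem cFun_length : ∀ w, (cFun w).length = w.length := fun w => (bcd_length w).2.1
theorem dFun_length : ∀ w, (dFun w).length = w.length := fun w => (bcd_length w).2.2

/-- The generators of the first Grigorchuk group as permutations of the vertex set
`{0,1}*` of the rooted binary tree. -/
def aPerm : Equiv.Perm (List Bool) := aFun_involutive.toPerm
def bPerm : Equiv.Perm (List Bool) := bFun_involutive.toPerm
def cPerm : Equiv.Perm (List Bool) := cFun_involutive.toPerm
def dPerm : Equiv.Perm (List Bool) := dFun_involutive.toPerm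

/-- The generating set `S = {a, b, c, d}` (a set of involutions). -/
def Sset : Set (Equiv.Perm (List Bool)) := {aPerm, bPerm, cPerm, dPerm}

/-- The first Grigorchuk group. -/
def Grigorchuk : Subgroup (Equiv.Perm (List Bool)) := Subgroup.closure Sset

/-- Word length with respect to `S = {a, b, c, d}`. -/
def wordLength (g : Equiv.Perm (List Bool)) : ℕ :=
  sInf {k | ∃ l : List (Equiv.Perm (List Bool)),
    (∀ x ∈ l, x ∈ Sset) ∧ l.length = k ∧ l.prod = g}

/-- The growth function of the first Grigorchuk group with respect to `S`. -/
def growthGrig (m : ℕ) : ℕ :=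
  Nat.card {g : Equiv.Perm (List Bool) |
    ∃ l : List (Equiv.Perm (List Bool)), (∀ x ∈ l, x ∈ Sset) ∧ l.length ≤ m ∧ l.prod = g}

/-! ### Level transfer -/

def levelFun (n : ℕ) (f : List Bool → List Bool) (v : Fin n → Bool) : Fin n → Bool :=
  fun i => (f (List.ofFn v)).getD i false

theorem levelFun_involutive (n : ℕ) (f : List Bool → List Bool)
    (hlen : ∀ l, (f l).length = l.length) (hinv : Function.Involutive f) :
    Function.Involutive (levelFun n f) := by
  intro v
  have key : ∀ u : Fin n → Bool, List.ofFn (levelFun n f u) = f (List.ofFn u) := by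
    intro u
    apply List.ext_getElem
    · simp [hlen]
    · intro i h1 h2
      simp only [List.getElem_ofFn]
      simp [levelFun, List.getD_eq_getElem, h2]
  funext i
  simp only [levelFun, key v, hinv (List.ofFn v)]
  simp [List.getD_eq_getElem]

/-- The images `a_n, b_n, c_n, d_n` of the Grigorchuk generators in `Sym(X_n)`,
where the `n`-th level `X_n = {0,1}^n` is identified with `Fin n → Bool`. -/
def aLev (n : ℕ) : Equiv.Perm (Fin n → Bool) :=
  (levelFun_involutive n aFun aFun_length aFun_involutive).toPerm
def bLev (n : ℕ) : Equiv.Perm (Fin n → Bool) :=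
  (levelFun_involutive n bFun bFun_length bFun_involutive).toPerm
def cLev (n : ℕ) : Equiv.Perm (Fin n → Bool) :=
  (levelFun_involutive n cFun cFun_length cFun_involutive).toPerm
def dLev (n : ℕ) : Equiv.Perm (Fin n → Bool) :=
  (levelFun_involutive n dFun dFun_length dFun_involutive).toPerm

end Grig

/-! ### The space `C_{Y_n}` and the generating set `T_n` -/

namespace TV

/-- The `n`-th level `X_n = {0,1}^n` of the binary tree. -/
abbrev XL (n : ℕ) : Type := Fin n → Bool

/-- `C_{Y_n} = C × Y_n` with `Y_n = X_n × {1,2,3,4}`; the sheets are indexed by `Fin 4`. -/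
abbrev Mn (n : ℕ) : Type := Cantor × (XL n × Fin 4)

/-- `ρ_n = 1^n`. -/
def rhoL (n : ℕ) : XL n := fun _ => true
/-- `η_n = 1^{n-1}0`. -/
def etaL (n : ℕ) : XL n := fun i => decide ((i : ℕ) < n - 1)
/-- `θ_n = 01^{n-1}`. -/
def thetaL (n : ℕ) : XL n := fun i => decide (0 < (i : ℕ))

/-- A type 1 generator: an element of `S_n` acting diagonally on the four sheets. -/
def type1Gen (n : ℕ) (s : Equiv.Perm (XL n)) : Mn n ≃ₜ Mn n :=
  basePermHomeo (s.prodCongr (Equiv.refl (Fin 4)))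

/-- The set of type 1 generators (the truncated Grigorchuk generators). -/
def Type1Set (n : ℕ) : Set (Mn n ≃ₜ Mn n) :=
  {type1Gen n (Grig.aLev n), type1Gen n (Grig.bLev n),
   type1Gen n (Grig.cLev n), type1Gen n (Grig.dLev n)}

/-- A type 2 generator: an element of `Sym(4)_{η_n}`. -/
def type2Gen (n : ℕ) (π : Equiv.Perm (Fin 4)) : Mn n ≃ₜ Mn n :=
  basePermHomeo (Equiv.prodCongrRight fun x : XL n =>
    if x = etaL n then π else Equiv.refl (Fin 4))

/-- The copy `Sym(4)_{η_n}` of the symmetric group over `η_n` (type 2 generators). -/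
def Type2Set (n : ℕ) : Set (Mn n ≃ₜ Mn n) := Set.range (type2Gen n)

/-- The linking transposition `τ_n` (type 3), exchanging the first sheets over
`ρ_n` and `θ_n`. -/
def tauN (n : ℕ) : Mn n ≃ₜ Mn n :=
  basePermHomeo (Equiv.swap (rhoL n, (0 : Fin 4)) (thetaL n, (0 : Fin 4)))

/-- `X₁^{(n)}`: the copy of `X₀` supported on the fourth sheet over `ρ_n` (type 4). -/
def X1n (n : ℕ) : Mn n ≃ₜ Mn n :=
  fiberedHomeo fun y : XL n × Fin 4 =>
    if y = (rhoL n, (3 : Fin 4)) then X0c else Homeomorph.refl Cantor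

/-! The homeomorphism of `C × {1,2,3,4}` acting as `X₀` on `D = C_2 ⊔ C_3` (sheets `1`, `2`
in the `Fin 4` indexing) under the identification `(ξ, i) ↦ (i-2)ξ`, and trivial elsewhere. -/

def x0dSheet (i : Fin 4) (b0 : Bool) : Fin 4 :=
  if i = 1 then (if b0 = false then 1 else 2) else i

def x0dCore (i : Fin 4) (n : ℕ) (b0 w v u : Bool) : Bool :=
  if i = 1 then (if b0 = false then u else if n = 0 then false else v)
  else if i = 2 then (if n = 0 then true else w)
  else v

def x0dSheetInv (i : Fin 4) (b0 : Bool) : Fin 4 :=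
  if i = 2 then (if b0 = false then 1 else 2) else i

def x0dCoreInv (i : Fin 4) (n : ℕ) (b0 w v u : Bool) : Bool :=
  if i = 1 then (if n = 0 then false else w)
  else if i = 2 then (if b0 = false then (if n = 0 then true else v) else u)
  else v

def x0dFun (p : Cantor × Fin 4) : Cantor × Fin 4 :=
  ((fun n => x0dCore p.2 n (p.1 0) (p.1 (n - 1)) (p.1 n) (p.1 (n + 1))),
    x0dSheet p.2 (p.1 0))

def x0dInvFun (p : Cantor × Fin 4) : Cantor × Fin 4 :=
  ((fun n => x0dCoreInv p.2 n (p.1 0) (p.1 (n - 1)) (p.1 n) (p.1 (n + 1))),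
    x0dSheetInv p.2 (p.1 0))

theorem x0d_left_inv : Function.LeftInverse x0dInvFun x0dFun := by
  rintro ⟨ξ, i⟩
  rcases hb0 : ξ 0 with _ | _ <;> fin_cases i <;>
    refine Prod.ext (funext fun n => ?_) ?_ <;>
    first
      | (rcases n with _ | n <;>
          simp [x0dFun, x0dInvFun, x0dCore, x0dCoreInv, x0dSheet, x0dSheetInv, hb0])
      | simp [x0dFun, x0dInvFun, x0dCore, x0dCoreInv, x0dSheet, x0dSheetInv, hb0]

theorem x0d_right_inv : Function.RightInverse x0dInvFun x0dFun := by
  rintro ⟨ξ, i⟩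
  rcases hb0 : ξ 0 with _ | _ <;> fin_cases i <;>
    refine Prod.ext (funext fun n => ?_) ?_ <;>
    first
      | (rcases n with _ | n <;>
          simp [x0dFun, x0dInvFun, x0dCore, x0dCoreInv, x0dSheet, x0dSheetInv, hb0])
      | simp [x0dFun, x0dInvFun, x0dCore, x0dCoreInv, x0dSheet, x0dSheetInv, hb0]

theorem x0dFun_continuous : Continuous x0dFun := by
  have h : Continuous fun p : Cantor × Fin 4 => x0dFun (p.1, p.2) := by
    refine cont_fibered (Z := Cantor × Fin 4) (fun ξ i => x0dFun (ξ, i)) fun i => ?_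
    refine Continuous.prodMk ?_ ?_
    · exact cantor_core_continuous fun n b0 _ _ w v u => x0dCore i n b0 w v u
    · exact Continuous.comp
        (continuous_of_discreteTopology (α := Bool) (f := x0dSheet i)) (continuous_apply 0)
  simpa using h

theorem x0dInvFun_continuous : Continuous x0dInvFun := by
  have h : Continuous fun p : Cantor × Fin 4 => x0dInvFun (p.1, p.2) := by
    refine cont_fibered (Z := Cantor × Fin 4) (fun ξ i => x0dInvFun (ξ, i)) fun i => ?_
    refine Continuous.prodMk ?_ ?_
    · exact cantor_core_continuous fun n b0 _ _ w v u => x0dCoreInv i n b0 w v u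
    · exact Continuous.comp
        (continuous_of_discreteTopology (α := Bool) (f := x0dSheetInv i)) (continuous_apply 0)
  simpa using h

def X0D : (Cantor × Fin 4) ≃ₜ (Cantor × Fin 4) where
  toEquiv := ⟨x0dFun, x0dInvFun, x0d_left_inv, x0d_right_inv⟩
  continuous_toFun := x0dFun_continuous
  continuous_invFun := x0dInvFun_continuous

/-- Reshuffling `C × (X_n × {1,…,4}) ≃ₜ (C × {1,…,4}) × X_n`. -/
def reshuffle (n : ℕ) : Mn n ≃ₜ (Cantor × Fin 4) × XL n :=
  ((Homeomorph.refl Cantor).prodCongr (Homeomorph.prodComm (XL n) (Fin 4))).trans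
    (Homeomorph.prodAssoc Cantor (Fin 4) (XL n)).symm

/-- `X₀^{(n)}`: acting as `X₀` on `D_n = C_{(ρ_n,2)} ⊔ C_{(ρ_n,3)}` (type 4). -/
def X0n (n : ℕ) : Mn n ≃ₜ Mn n :=
  (reshuffle n).trans ((fiberedHomeo fun x : XL n =>
    if x = rhoL n then X0D else Homeomorph.refl (Cantor × Fin 4)).trans (reshuffle n).symm)

/-- The type 4 generators. -/
def Type4Set (n : ℕ) : Set (Mn n ≃ₜ Mn n) := {X0n n, X1n n}

/-- The generating set `T_n`. -/
def TnSet (n : ℕ) : Set (Mn n ≃ₜ Mn n) :=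
  Type1Set n ∪ Type2Set n ∪ {tauN n} ∪ Type4Set n

/-- The group `W_n = ⟨T_n⟩`. -/
def Wn (n : ℕ) : Subgroup (Mn n ≃ₜ Mn n) := Subgroup.closure (TnSet n)

/-- The generators of types `2`, `3` and `4`. -/
def typeSet (n : ℕ) : ℕ → Set (Mn n ≃ₜ Mn n)
  | 2 => Type2Set n
  | 3 => {tauN n}
  | 4 => Type4Set n
  | _ => ∅

end TV

end

noncomputable section

/-- The product of the conjugates `(a_1)^{g_1 ⋯ g_ℓ} (a_2)^{g_2 ⋯ g_ℓ} ⋯ (a_ℓ)^{g_ℓ}`,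
where `x^h = h⁻¹xh` and `gs = [g_1, …, g_ℓ]`, `as = [a_1, …, a_ℓ]`. -/
def conjProd {G : Type*} [Group G] (gs as : List G) : G :=
  (List.ofFn fun i : Fin as.length =>
    ((gs.drop (i : ℕ)).prod)⁻¹ * as.get i * (gs.drop (i : ℕ)).prod).prod

-- AUXSTART
namespace NF

/-! ### Group-theoretic lemmas -/

variable {G : Type*} [Group G]

theorem conjProd_nil (gs : List G) : conjProd gs [] = 1 := by
  simp [conjProd]

theorem conjProd_cons (g : G) (gs : List G) (a : G) (as : List G) :
    conjProd (g :: gs) (a :: as) =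
      ((g * gs.prod)⁻¹ * a * (g * gs.prod)) * conjProd gs as := by
  simp [conjProd, List.ofFn_succ]

theorem prod_zipWith (as gs : List G) (h : as.length = gs.length) :
    (List.zipWith (· * ·) as gs).prod = gs.prod * conjProd gs as := by
  induction as generalizing gs with
  | nil =>
    cases gs with
    | nil => simp [conjProd_nil]
    | cons g gs => simp at h
  | cons a as ih =>
    cases gs with
    | nil => simp at h
    | cons g gs =>
      simp only [List.length_cons, Nat.succ.injEq] at h
      simp only [List.zipWith_cons_cons, List.prod_cons, conjProd_cons]
      rw [ih gs h]
      group

theorem mem_zipWith_mul {xs ys : List G} {z : G} (hz : z ∈ List.zipWith (· * ·) xs ys) :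
    ∃ x ∈ xs, ∃ y ∈ ys, z = x * y := by
  induction xs generalizing ys with
  | nil => simp at hz
  | cons x xs ih =>
    cases ys with
    | nil => simp at hz
    | cons y ys =>
      simp only [List.zipWith_cons_cons, List.mem_cons] at hz
      rcases hz with rfl | hz
      · exact ⟨x, by simp, y, by simp, rfl⟩
      · obtain ⟨x', hx', y', hy', rfl⟩ := ih hz
        exact ⟨x', by simp [hx'], y', by simp [hy'], rfl⟩

theorem conjProd_split (gs xs ys : List G) (hxy : xs.length = ys.length)
    (hxg : xs.length = gs.length)
    (H : ∀ x ∈ xs, ∀ y ∈ ys, ∀ i j : ℕ,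
      Commute (((gs.drop i).prod)⁻¹ * x * (gs.drop i).prod)
        (((gs.drop j).prod)⁻¹ * y * (gs.drop j).prod)) :
    conjProd gs (List.zipWith (· * ·) xs ys) = conjProd gs xs * conjProd gs ys := by
  induction xs generalizing ys gs with
  | nil =>
    have : ys = [] := List.length_eq_zero_iff.mp hxy.symm
    subst this
    simp [conjProd_nil]
  | cons x xs ih =>
    cases ys with
    | nil => simp at hxy
    | cons y ys =>
      cases gs with
      | nil => simp at hxg
      | cons g gs =>
        simp only [List.length_cons, Nat.succ.injEq] at hxy hxg
        have H' : ∀ x' ∈ xs, ∀ y' ∈ ys, ∀ i j : ℕ,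
            Commute (((gs.drop i).prod)⁻¹ * x' * (gs.drop i).prod)
              (((gs.drop j).prod)⁻¹ * y' * (gs.drop j).prod) := by
          intro x' hx' y' hy' i j
          have := H x' (List.mem_cons_of_mem _ hx') y' (List.mem_cons_of_mem _ hy') (i+1) (j+1)
          simpa using this
        have key : Commute ((g * gs.prod)⁻¹ * y * (g * gs.prod)) (conjProd gs xs) := by
          apply Commute.list_prod_right
          intro z hz
          rw [List.mem_ofFn] at hz
          obtain ⟨i, rfl⟩ := hz
          have hx : xs.get i ∈ x :: xs :=
            List.mem_cons_of_mem _ (by exact List.get_mem xs i)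
          have := (H (xs.get i) hx y (by simp) ((i : ℕ) + 1) 0).symm
          simpa using this
        simp only [List.zipWith_cons_cons, conjProd_cons, ih gs ys hxy hxg H']
        rw [show ((g * gs.prod)⁻¹ * (x * y) * (g * gs.prod)) =
          ((g * gs.prod)⁻¹ * x * (g * gs.prod)) * ((g * gs.prod)⁻¹ * y * (g * gs.prod)) by group]
        calc ((g * gs.prod)⁻¹ * x * (g * gs.prod)) * ((g * gs.prod)⁻¹ * y * (g * gs.prod)) *
              (conjProd gs xs * conjProd gs ys)
            = ((g * gs.prod)⁻¹ * x * (g * gs.prod)) *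
              (((g * gs.prod)⁻¹ * y * (g * gs.prod)) * conjProd gs xs) * conjProd gs ys := by
              group
          _ = ((g * gs.prod)⁻¹ * x * (g * gs.prod)) *
              (conjProd gs xs * ((g * gs.prod)⁻¹ * y * (g * gs.prod))) * conjProd gs ys := by
              rw [key.eq]
          _ = _ := by group

theorem reverse_prod_inv (L : List G) (h : ∀ s ∈ L, s⁻¹ = s) :
    (L.prod)⁻¹ = L.reverse.prod := by
  induction L with
  | nil => simp
  | cons s L ih =>
    simp only [List.prod_cons, mul_inv_rev, List.reverse_cons, List.prod_append,
      List.prod_cons, List.prod_nil, mul_one]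
    rw [ih (fun x hx => h x (List.mem_cons_of_mem _ hx)), h s (by simp)]


/-! ### The Gray-code potential function on binary words -/

open Grig

/-- Parity of the number of `false`s in a word. -/
def zpar : List Bool → Bool
  | [] => false
  | x :: t => xor (!x) (zpar t)

/-- The Gray-code position of a word in the level Schreier graph. -/
def phiL : List Bool → ℤ
  | [] => 0
  | x :: t => (if xor (!x) (zpar t) then 1 else 0) + 2 * phiL t

theorem aFun_facts (s : Bool) (u : List Bool) :
    zpar (aFun (s :: u)) = !zpar (s :: u) ∧
      phiL (aFun (s :: u)) = phiL (s :: u) + (if zpar (s :: u) then -1 else 1) := by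
  rcases s with _ | _ <;> rcases hz : zpar u with _ | _ <;>
    simp [aFun, zpar, phiL, hz] <;> ring

theorem bcd_facts : ∀ t : List Bool,
    ((bFun t = t) ∨ (zpar (bFun t) = !zpar t ∧
        phiL (bFun t) = phiL t + (if zpar t then 1 else -1))) ∧
    ((cFun t = t) ∨ (zpar (cFun t) = !zpar t ∧
        phiL (cFun t) = phiL t + (if zpar t then 1 else -1))) ∧
    ((dFun t = t) ∨ (zpar (dFun t) = !zpar t ∧
        phiL (dFun t) = phiL t + (if zpar t then 1 else -1))) := by
  have haux : ∀ (f : List Bool → List Bool) (s : Bool) (u : List Bool),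
      f (false :: s :: u) = false :: aFun (s :: u) →
      zpar (f (false :: s :: u)) = !zpar (false :: s :: u) ∧
        phiL (f (false :: s :: u)) = phiL (false :: s :: u) +
          (if zpar (false :: s :: u) then 1 else -1) := by
    intro f s u hf
    obtain ⟨hz, hp⟩ := aFun_facts s u
    rw [hf]
    constructor
    · show xor (!false) (zpar (aFun (s :: u))) = !(xor (!false) (zpar (s :: u)))
      rw [hz]; rcases zpar (s :: u) with _ | _ <;> rfl
    · show (if xor (!false) (zpar (aFun (s :: u))) then (1:ℤ) else 0)
          + 2 * phiL (aFun (s :: u)) =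
        ((if xor (!false) (zpar (s :: u)) then (1:ℤ) else 0) + 2 * phiL (s :: u)) +
          (if xor (!false) (zpar (s :: u)) then 1 else -1)
      rw [hz, hp]
      rcases zpar (s :: u) with _ | _ <;> simp <;> ring
  have htru : ∀ (f g : List Bool → List Bool) (t : List Bool),
      f (true :: t) = true :: g t →
      ((g t = t) ∨ (zpar (g t) = !zpar t ∧
        phiL (g t) = phiL t + (if zpar t then 1 else -1))) →
      ((f (true :: t) = true :: t) ∨ (zpar (f (true :: t)) = !zpar (true :: t) ∧
        phiL (f (true :: t)) = phiL (true :: t) +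
          (if zpar (true :: t) then 1 else -1))) := by
    intro f g t hf hg
    rw [hf]
    rcases hg with h | ⟨hz, hp⟩
    · exact Or.inl (by rw [h])
    · right
      constructor
      · show xor (!true) (zpar (g t)) = !(xor (!true) (zpar t))
        rw [hz]; rcases zpar t with _ | _ <;> rfl
      · show (if xor (!true) (zpar (g t)) then (1:ℤ) else 0) + 2 * phiL (g t) =
          ((if xor (!true) (zpar t) then (1:ℤ) else 0) + 2 * phiL t) +
            (if xor (!true) (zpar t) then 1 else -1)
        rw [hz, hp]
        rcases zpar t with _ | _ <;> simp <;> ring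
  intro t
  induction t with
  | nil => exact ⟨Or.inl rfl, Or.inl rfl, Or.inl rfl⟩
  | cons x t ih =>
    rcases x with _ | _
    · refine ⟨?_, ?_, Or.inl rfl⟩ <;>
      · rcases t with _ | ⟨s, u⟩
        · exact Or.inl rfl
        · exact Or.inr (haux _ s u rfl)
    · exact ⟨htru bFun cFun t rfl ih.2.1, htru cFun dFun t rfl ih.2.2,
        htru dFun bFun t rfl ih.1⟩

theorem abs_phiL_sub_le (f : List Bool → List Bool)
    (hf : f = aFun ∨ f = bFun ∨ f = cFun ∨ f = dFun) (t : List Bool) :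
    |phiL (f t) - phiL t| ≤ 1 := by
  have habs : ∀ z : Bool, |(if z then (1:ℤ) else -1)| ≤ 1 := by
    intro z; rcases z with _ | _ <;> norm_num
  have habs' : ∀ z : Bool, |(if z then (-1:ℤ) else 1)| ≤ 1 := by
    intro z; rcases z with _ | _ <;> norm_num
  rcases hf with rfl | rfl | rfl | rfl
  · rcases t with _ | ⟨s, u⟩
    · simp [aFun]
    · rw [(aFun_facts s u).2]; simpa using habs' (zpar (s :: u))
  · rcases (bcd_facts t).1 with h | ⟨_, hp⟩
    · simp [h]
    · rw [hp]; simpa using habs (zpar t)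
  · rcases (bcd_facts t).2.1 with h | ⟨_, hp⟩
    · simp [h]
    · rw [hp]; simpa using habs (zpar t)
  · rcases (bcd_facts t).2.2 with h | ⟨_, hp⟩
    · simp [h]
    · rw [hp]; simpa using habs (zpar t)

/-! ### Values of the potential -/

theorem phiL_replicate_true (m : ℕ) :
    zpar (List.replicate m true) = false ∧ phiL (List.replicate m true) = 0 := by
  induction m with
  | zero => exact ⟨rfl, rfl⟩
  | succ m ih => simp [List.replicate_succ, zpar, phiL, ih.1, ih.2]

theorem phiL_eta_word (m : ℕ) :
    zpar (List.replicate m true ++ [false]) = true ∧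
      phiL (List.replicate m true ++ [false]) = 2 ^ (m + 1) - 1 := by
  induction m with
  | zero => norm_num [zpar, phiL]
  | succ m ih =>
    refine ⟨by simp [List.replicate_succ, zpar, ih.1], ?_⟩
    show (if xor (!true) (zpar (List.replicate m true ++ [false])) then (1:ℤ) else 0)
        + 2 * phiL (List.replicate m true ++ [false]) = 2 ^ (m + 1 + 1) - 1
    rw [ih.1, ih.2]
    norm_num [pow_succ]
    ring

theorem phiL_theta_word (m : ℕ) :
    phiL (false :: List.replicate m true) = 1 := by
  simp [phiL, (phiL_replicate_true m).1, (phiL_replicate_true m).2]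


/-! ### Transfer to level `n` -/

/-- The level generators together with the identity. -/
def LevSet (n : ℕ) : Set (Equiv.Perm (TV.XL n)) :=
  ({aLev n, bLev n, cLev n, dLev n} : Set (Equiv.Perm (TV.XL n))) ∪ {1}

def phiX {n : ℕ} (v : TV.XL n) : ℤ := phiL (List.ofFn v)

theorem ofFn_levelFun (n : ℕ) (f : List Bool → List Bool)
    (hlen : ∀ l, (f l).length = l.length) (v : TV.XL n) :
    List.ofFn (levelFun n f v) = f (List.ofFn v) := by
  apply List.ext_getElem
  · simp [hlen]
  · intro i h1 h2
    simp only [List.getElem_ofFn]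
    simp [levelFun, List.getD_eq_getElem, h2]

theorem phiX_step {n : ℕ} (s : Equiv.Perm (TV.XL n)) (hs : s ∈ LevSet n) (v : TV.XL n) :
    |phiX (s v) - phiX v| ≤ 1 := by
  rcases hs with (rfl | rfl | rfl | rfl) | rfl
  · show |phiL (List.ofFn (levelFun n aFun v)) - phiL (List.ofFn v)| ≤ 1
    rw [ofFn_levelFun n aFun aFun_length v]
    exact abs_phiL_sub_le aFun (Or.inl rfl) _
  · show |phiL (List.ofFn (levelFun n bFun v)) - phiL (List.ofFn v)| ≤ 1
    rw [ofFn_levelFun n bFun bFun_length v]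
    exact abs_phiL_sub_le bFun (Or.inr (Or.inl rfl)) _
  · show |phiL (List.ofFn (levelFun n cFun v)) - phiL (List.ofFn v)| ≤ 1
    rw [ofFn_levelFun n cFun cFun_length v]
    exact abs_phiL_sub_le cFun (Or.inr (Or.inr (Or.inl rfl))) _
  · show |phiL (List.ofFn (levelFun n dFun v)) - phiL (List.ofFn v)| ≤ 1
    rw [ofFn_levelFun n dFun dFun_length v]
    exact abs_phiL_sub_le dFun (Or.inr (Or.inr (Or.inr rfl))) _
  · simp [phiX]

theorem phiX_word {n : ℕ} (L : List (Equiv.Perm (TV.XL n))) (hL : ∀ s ∈ L, s ∈ LevSet n)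
    (v : TV.XL n) : |phiX (L.prod v) - phiX v| ≤ L.length := by
  induction L with
  | nil => simp
  | cons s L ih =>
    have h1 : |phiX (s (L.prod v)) - phiX (L.prod v)| ≤ 1 :=
      phiX_step s (hL s (by simp)) (L.prod v)
    have h2 : |phiX (L.prod v) - phiX v| ≤ L.length :=
      ih (fun x hx => hL x (List.mem_cons_of_mem _ hx)) 
    have : (s :: L).prod v = s (L.prod v) := by
      rw [List.prod_cons]; rfl
    rw [this]
    calc |phiX (s (L.prod v)) - phiX v|
        ≤ |phiX (s (L.prod v)) - phiX (L.prod v)| + |phiX (L.prod v) - phiX v| :=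
          abs_sub_le _ _ _
      _ ≤ 1 + L.length := add_le_add h1 h2
      _ = (s :: L).length := by simp [add_comm]
    
theorem phiX_rho (n : ℕ) : phiX (TV.rhoL n) = 0 := by
  have : List.ofFn (TV.rhoL n) = List.replicate n true := by
    apply List.ext_getElem <;> simp [TV.rhoL]
  rw [phiX, this, (phiL_replicate_true n).2]

theorem phiX_theta {n : ℕ} (hn : 1 ≤ n) : phiX (TV.thetaL n) = 1 := by
  have : List.ofFn (TV.thetaL n) = false :: List.replicate (n - 1) true := by
    apply List.ext_getElem
    · simp; omega
    · intro i h1 h2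
      rcases i with _ | i <;> simp [TV.thetaL]
  rw [phiX, this, phiL_theta_word]

theorem phiX_eta {n : ℕ} (hn : 1 ≤ n) : phiX (TV.etaL n) = 2 ^ n - 1 := by
  have : List.ofFn (TV.etaL n) = List.replicate (n - 1) true ++ [false] := by
    apply List.ext_getElem
    · simp; omega
    · intro i h1 h2
      simp only [List.getElem_ofFn, TV.etaL]
      by_cases hi : i < n - 1
      · rw [List.getElem_append_left (by simpa using hi)]
        simp [hi]
      · rw [List.getElem_append_right (by simpa using hi)]
        simp only [List.length_replicate]
        have : i = n - 1 := by simp at h1; omega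
        simp [this]
  rw [phiX, this, (phiL_eta_word (n - 1)).2]
  have h : n - 1 + 1 = n := by omega
  rw [h]

/-- The geometric separation lemma: short words in the level generators cannot
move `η` to the orbit points `ρ`, `θ`. -/
theorem geo_sep {n : ℕ} (hn : 4 ≤ n) (u w : List (Equiv.Perm (TV.XL n)))
    (hu : ∀ s ∈ u, s ∈ LevSet n) (hw : ∀ s ∈ w, s ∈ LevSet n)
    (hul : u.length ≤ 2 ^ (n / 2)) (hwl : w.length ≤ 2 ^ (n / 2)) :
    u.prod (TV.etaL n) ≠ w.prod (TV.rhoL n) ∧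
      u.prod (TV.etaL n) ≠ w.prod (TV.thetaL n) := by
  have h1 : |phiX (u.prod (TV.etaL n)) - phiX (TV.etaL n)| ≤ u.length := phiX_word u hu _
  have h2 : |phiX (w.prod (TV.rhoL n)) - phiX (TV.rhoL n)| ≤ w.length := phiX_word w hw _
  have h3 : |phiX (w.prod (TV.thetaL n)) - phiX (TV.thetaL n)| ≤ w.length := phiX_word w hw _
  rw [phiX_eta (by omega)] at h1
  rw [phiX_rho] at h2
  rw [phiX_theta (by omega)] at h3
  have hd2 : (2 : ℤ) ^ (n / 2) ≤ 2 ^ (n - 2) := by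
    apply pow_le_pow_right₀ (by norm_num)
    omega
  have h4 : (2 : ℤ) ^ n = 2 ^ (n - 2) * 4 := by
    rw [show (4:ℤ) = 2 ^ 2 by norm_num, ← pow_add]
    congr 1
    omega
  have hk : (4 : ℤ) ≤ 2 ^ (n - 2) := by
    calc (4 : ℤ) = 2 ^ 2 := by norm_num
    _ ≤ 2 ^ (n - 2) := pow_le_pow_right₀ (by norm_num) (by omega)
  have hul' : (u.length : ℤ) ≤ 2 ^ (n - 2) := le_trans (by exact_mod_cast hul) hd2
  have hwl' : (w.length : ℤ) ≤ 2 ^ (n - 2) := le_trans (by exact_mod_cast hwl) hd2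
  constructor
  · intro h
    rw [h, abs_le] at h1
    rw [abs_le] at h2
    linarith [h1.1, h2.2]
  · intro h
    rw [h, abs_le] at h1
    rw [abs_le] at h3
    linarith [h1.1, h3.2]


/-! ### Supports and commutation in the homeomorphism group -/

section Homeo

open TV

variable {n : ℕ}

theorem hmul_apply {X : Type*} [TopologicalSpace X] (f g : X ≃ₜ X) (p : X) :
    (f * g) p = f (g p) := rfl

theorem hinv_eq {X : Type*} [TopologicalSpace X] (f : X ≃ₜ X) : f⁻¹ = f.symm := rfl

theorem commute_of_disjoint_supp (f g : Mn n ≃ₜ Mn n) (S T : Set (XL n × Fin 4))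
    (hf1 : ∀ p : Mn n, p.2 ∉ S → f p = p) (hf2 : ∀ p : Mn n, p.2 ∈ S → (f p).2 ∈ S)
    (hg1 : ∀ p : Mn n, p.2 ∉ T → g p = p) (hg2 : ∀ p : Mn n, p.2 ∈ T → (g p).2 ∈ T)
    (hd : ∀ y : XL n × Fin 4, y ∈ S → y ∉ T) : Commute f g := by
  show f * g = g * f
  apply Homeomorph.ext
  intro p
  rw [hmul_apply, hmul_apply]
  by_cases hp : p.2 ∈ S
  · rw [hg1 p (hd _ hp), hg1 (f p) (hd _ (hf2 p hp))]
  · rw [hf1 p hp]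
    by_cases hq : p.2 ∈ T
    · exact hf1 (g p) (fun hmem => hd _ hmem (hg2 p hq))
    · rw [hg1 p hq, hf1 p hp]

theorem type1_apply (s : Equiv.Perm (XL n)) (p : Mn n) :
    type1Gen n s p = (p.1, (s p.2.1, p.2.2)) := rfl

theorem type1_word (ks : List (Mn n ≃ₜ Mn n)) (h : ∀ x ∈ ks, x ∈ Type1Set n ∪ {1}) :
    ∃ L : List (Equiv.Perm (XL n)), L.length = ks.length ∧ (∀ s ∈ L, s ∈ LevSet n) ∧
      ∀ p : Mn n, ks.prod p = (p.1, (L.prod p.2.1, p.2.2)) := by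
  induction ks with
  | nil => exact ⟨[], rfl, by simp, fun p => rfl⟩
  | cons x ks ih =>
    obtain ⟨L, hlen, hmem, hact⟩ := ih (fun y hy => h y (List.mem_cons_of_mem _ hy))
    have hx := h x (by simp)
    have hx' : ∃ s ∈ LevSet n, ∀ p : Mn n, x p = (p.1, (s p.2.1, p.2.2)) := by
      rcases hx with hx | hx
      · rcases hx with rfl | rfl | rfl | rfl
        · exact ⟨Grig.aLev n, Or.inl (by left; rfl), fun p => rfl⟩
        · exact ⟨Grig.bLev n, Or.inl (by right; left; rfl), fun p => rfl⟩
        · exact ⟨Grig.cLev n, Or.inl (by right; right; left; rfl), fun p => rfl⟩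
        · exact ⟨Grig.dLev n, Or.inl (by right; right; right; rfl), fun p => rfl⟩
      · rcases hx with rfl
        exact ⟨1, Or.inr rfl, fun p => rfl⟩
    obtain ⟨s, hs, hxact⟩ := hx'
    refine ⟨s :: L, by simp [hlen], ?_, ?_⟩
    · intro t ht
      rcases List.mem_cons.mp ht with rfl | ht
      · exact hs
      · exact hmem t ht
    · intro p
      rw [List.prod_cons, hmul_apply, hact p, hxact, List.prod_cons]
      rfl

theorem supp_conj (c : Mn n ≃ₜ Mn n) (σ : Equiv.Perm (XL n))
    (hc : ∀ p : Mn n, c p = (p.1, (σ p.2.1, p.2.2)))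
    (x : Mn n ≃ₜ Mn n) (Sx : Set (XL n × Fin 4))
    (hx1 : ∀ p : Mn n, p.2 ∉ Sx → x p = p) (hx2 : ∀ p : Mn n, p.2 ∈ Sx → (x p).2 ∈ Sx) :
    (∀ p : Mn n, p.2 ∉ {y : XL n × Fin 4 | (σ y.1, y.2) ∈ Sx} → (c⁻¹ * x * c) p = p) ∧
    (∀ p : Mn n, p.2 ∈ {y : XL n × Fin 4 | (σ y.1, y.2) ∈ Sx} →
      ((c⁻¹ * x * c) p).2 ∈ {y : XL n × Fin 4 | (σ y.1, y.2) ∈ Sx}) := by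
  have hcsymm : ∀ q : Mn n, c⁻¹ q = (q.1, (σ⁻¹ q.2.1, q.2.2)) := by
    intro q
    have h1 : c ((q.1, (σ⁻¹ q.2.1, q.2.2)) : Mn n) = q := by
      rw [hc]
      simp
    rw [hinv_eq]
    calc c.symm q = c.symm (c (q.1, (σ⁻¹ q.2.1, q.2.2))) := by rw [h1]
    _ = _ := c.symm_apply_apply _
  have hcp2 : ∀ p : Mn n, (c p).2 = (σ p.2.1, p.2.2) := fun p => by rw [hc]
  constructor
  · intro p hp
    rw [hmul_apply, hmul_apply, hx1 (c p) (by rw [hcp2]; exact hp), hinv_eq,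
      c.symm_apply_apply]
  · intro p hp
    have hmem : ((x (c p)).2 : XL n × Fin 4) ∈ Sx := hx2 (c p) (by rw [hcp2]; exact hp)
    rw [hmul_apply, hmul_apply, hcsymm]
    simp only [Set.mem_setOf_eq, Equiv.Perm.inv_def, Equiv.apply_symm_apply]
    simpa using hmem


/-- Base-sheet support of `τ_n`. -/
def Stau (n : ℕ) : Set (XL n × Fin 4) := {(rhoL n, 0), (thetaL n, 0)}
/-- Base-sheet support of type 2 generators. -/
def S2 (n : ℕ) : Set (XL n × Fin 4) := {y | y.1 = etaL n}
/-- Base-sheet support of `X₁⁽ⁿ⁾`. -/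
def SX1 (n : ℕ) : Set (XL n × Fin 4) := {(rhoL n, 3)}
/-- Base-sheet support of `X₀⁽ⁿ⁾`. -/
def SX0 (n : ℕ) : Set (XL n × Fin 4) := {y | y.1 = rhoL n ∧ (y.2 = 1 ∨ y.2 = 2)}

theorem tau_apply (p : Mn n) :
    tauN n p = (p.1, Equiv.swap (rhoL n, (0 : Fin 4)) (thetaL n, 0) p.2) := rfl

theorem supp_tau :
    (∀ p : Mn n, p.2 ∉ Stau n → tauN n p = p) ∧
      (∀ p : Mn n, p.2 ∈ Stau n → (tauN n p).2 ∈ Stau n) := by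
  constructor
  · intro p hp
    simp only [Stau, Set.mem_insert_iff, Set.mem_singleton_iff, not_or] at hp
    rw [tau_apply, Equiv.swap_apply_of_ne_of_ne hp.1 hp.2]
  · intro p hp
    rcases hp with hp | hp
    · rw [tau_apply]
      simp only [hp, Equiv.swap_apply_left]
      right
      rfl
    · rw [tau_apply]
      rw [Set.mem_singleton_iff] at hp
      simp only [hp, Equiv.swap_apply_right]
      left
      rfl

theorem type2_apply (π : Equiv.Perm (Fin 4)) (p : Mn n) :
    type2Gen n π p =
      (p.1, (p.2.1, (if p.2.1 = etaL n then π else Equiv.refl (Fin 4)) p.2.2)) := rfl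

theorem supp_type2 (π : Equiv.Perm (Fin 4)) :
    (∀ p : Mn n, p.2 ∉ S2 n → type2Gen n π p = p) ∧
      (∀ p : Mn n, p.2 ∈ S2 n → (type2Gen n π p).2 ∈ S2 n) := by
  constructor
  · intro p hp
    rw [type2_apply, if_neg (show ¬ p.2.1 = etaL n from hp)]
    rfl
  · intro p _
    assumption

theorem X1_apply (p : Mn n) :
    X1n n p =
      ((if p.2 = (rhoL n, (3:Fin 4)) then X0c else Homeomorph.refl Cantor) p.1, p.2) := rfl

theorem supp_X1 :
    (∀ p : Mn n, p.2 ∉ SX1 n → X1n n p = p) ∧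
      (∀ p : Mn n, p.2 ∈ SX1 n → (X1n n p).2 ∈ SX1 n) := by
  constructor
  · intro p hp
    rw [X1_apply, if_neg (show ¬ p.2 = (rhoL n, (3:Fin 4)) from hp)]
    rfl
  · intro p hp
    exact hp

theorem X0n_apply (p : Mn n) :
    X0n n p =
      (((if p.2.1 = rhoL n then X0D else Homeomorph.refl _) (p.1, p.2.2)).1,
        (p.2.1, ((if p.2.1 = rhoL n then X0D else Homeomorph.refl _) (p.1, p.2.2)).2)) := rfl

theorem X0D_fix (ξ : Cantor) (i : Fin 4) (hi : ¬(i = 1 ∨ i = 2)) : X0D (ξ, i) = (ξ, i) := by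
  push_neg at hi
  have h1 : x0dSheet i (ξ 0) = i := by
    rw [x0dSheet, if_neg hi.1]
  have h2 : (fun m => x0dCore i m (ξ 0) (ξ (m-1)) (ξ m) (ξ (m+1))) = ξ := by
    funext m
    rw [x0dCore, if_neg hi.1, if_neg hi.2]
  show x0dFun (ξ, i) = (ξ, i)
  rw [x0dFun]
  simp only [h1, h2]

theorem supp_X0 :
    (∀ p : Mn n, p.2 ∉ SX0 n → X0n n p = p) ∧
      (∀ p : Mn n, p.2 ∈ SX0 n → (X0n n p).2 ∈ SX0 n) := by
  constructor
  · intro p hp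
    rw [X0n_apply]
    by_cases hb : p.2.1 = rhoL n
    · have hi : ¬(p.2.2 = 1 ∨ p.2.2 = 2) := fun hc => hp ⟨hb, hc⟩
      rw [if_pos hb, X0D_fix p.1 p.2.2 hi]
    · rw [if_neg hb]
      rfl
  · intro p hp
    obtain ⟨hb, hi⟩ := hp
    rw [X0n_apply, if_pos hb]
    refine ⟨hb, ?_⟩
    show x0dSheet p.2.2 (p.1 0) = 1 ∨ x0dSheet p.2.2 (p.1 0) = 2
    rcases hi with hi | hi <;> rw [hi] <;> rcases hb0 : p.1 0 with _ | _ <;>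
      simp [x0dSheet]


theorem levset_self_inv {n : ℕ} : ∀ s ∈ LevSet n, s⁻¹ = s := by
  intro s hs
  have hinv : ∀ (f : TV.XL n → TV.XL n) (h : Function.Involutive f),
      (h.toPerm)⁻¹ = h.toPerm := fun f h => Equiv.ext fun v => rfl
  rcases hs with (rfl | rfl | rfl | rfl) | rfl
  · exact hinv _ _
  · exact hinv _ _
  · exact hinv _ _
  · exact hinv _ _
  · exact inv_one

/-- Commutation of conjugated type 3/4 generators with conjugated type 2 generators. -/
theorem conj_commute_32 {n : ℕ} (hn : 4 ≤ n) (cs ds : List (Mn n ≃ₜ Mn n))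
    (hcs : ∀ t ∈ cs, t ∈ Type1Set n ∪ {1}) (hds : ∀ t ∈ ds, t ∈ Type1Set n ∪ {1})
    (hcl : cs.length ≤ 2 ^ (n / 2)) (hdl : ds.length ≤ 2 ^ (n / 2))
    (x : Mn n ≃ₜ Mn n) (hx : x = tauN n ∨ x ∈ Type4Set n)
    (y : Mn n ≃ₜ Mn n) (hy : y ∈ Type2Set n) :
    Commute (cs.prod⁻¹ * x * cs.prod) (ds.prod⁻¹ * y * ds.prod) := by
  obtain ⟨Lc, hLclen, hLcmem, hcact⟩ := type1_word cs hcs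
  obtain ⟨Ld, hLdlen, hLdmem, hdact⟩ := type1_word ds hds
  obtain ⟨π, rfl⟩ := hy
  obtain ⟨Sx, hx1, hx2, hbase⟩ : ∃ Sx : Set (XL n × Fin 4),
      (∀ p : Mn n, p.2 ∉ Sx → x p = p) ∧ (∀ p : Mn n, p.2 ∈ Sx → (x p).2 ∈ Sx) ∧
      (∀ z ∈ Sx, z.1 = rhoL n ∨ z.1 = thetaL n) := by
    rcases hx with rfl | hx | hx
    · refine ⟨Stau n, supp_tau.1, supp_tau.2, ?_⟩
      rintro z (rfl | rfl)
      · exact Or.inl rfl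
      · exact Or.inr rfl
    · subst hx
      exact ⟨SX0 n, supp_X0.1, supp_X0.2, fun z hz => Or.inl hz.1⟩
    · rw [Set.mem_singleton_iff] at hx
      subst hx
      refine ⟨SX1 n, supp_X1.1, supp_X1.2, ?_⟩
      rintro z rfl
      exact Or.inl rfl
  obtain ⟨hA1, hA2⟩ := supp_conj cs.prod Lc.prod hcact x Sx hx1 hx2
  obtain ⟨hB1, hB2⟩ := supp_conj ds.prod Ld.prod hdact (type2Gen n π) (S2 n)
    (supp_type2 π).1 (supp_type2 π).2
  apply commute_of_disjoint_supp _ _ _ _ hA1 hA2 hB1 hB2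
  intro z hz1 hz2
  have hz1' : (Lc.prod z.1, z.2) ∈ Sx := hz1
  have hz2e : Ld.prod z.1 = etaL n := hz2
  have hinvc : (Lc.prod)⁻¹ = Lc.reverse.prod :=
    reverse_prod_inv Lc (fun s hs => levset_self_inv s (hLcmem s hs))
  have hinvd : (Ld.prod)⁻¹ = Ld.reverse.prod :=
    reverse_prod_inv Ld (fun s hs => levset_self_inv s (hLdmem s hs))
  have hgeo := geo_sep hn Ld.reverse Lc.reverse
    (fun s hs => hLdmem s (List.mem_reverse.mp hs))
    (fun s hs => hLcmem s (List.mem_reverse.mp hs))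
    (by rw [List.length_reverse, hLdlen]; exact hdl)
    (by rw [List.length_reverse, hLclen]; exact hcl)
  have hz2' : z.1 = Ld.reverse.prod (etaL n) := by
    rw [← hinvd, ← hz2, Equiv.Perm.inv_def, Equiv.symm_apply_apply]
  rcases hbase _ hz1' with hb | hb
  · have hb' : Lc.prod z.1 = rhoL n := hb
    have hz1'' : z.1 = Lc.reverse.prod (rhoL n) := by
      rw [← hinvc, ← hb', Equiv.Perm.inv_def, Equiv.symm_apply_apply]
    exact hgeo.1 (hz2' ▸ hz1'')
  · have hb' : Lc.prod z.1 = thetaL n := hb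
    have hz1'' : z.1 = Lc.reverse.prod (thetaL n) := by
      rw [← hinvc, ← hb', Equiv.Perm.inv_def, Equiv.symm_apply_apply]
    exact hgeo.2 (hz2' ▸ hz1'')

/-- Commutation of conjugated type 3 generators with conjugated type 4 generators. -/
theorem conj_commute_34 {n : ℕ} (cs ds : List (Mn n ≃ₜ Mn n))
    (hcs : ∀ t ∈ cs, t ∈ Type1Set n ∪ {1}) (hds : ∀ t ∈ ds, t ∈ Type1Set n ∪ {1})
    (y : Mn n ≃ₜ Mn n) (hy : y ∈ Type4Set n) :
    Commute (cs.prod⁻¹ * tauN n * cs.prod) (ds.prod⁻¹ * y * ds.prod) := by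
  obtain ⟨Lc, hLclen, hLcmem, hcact⟩ := type1_word cs hcs
  obtain ⟨Ld, hLdlen, hLdmem, hdact⟩ := type1_word ds hds
  obtain ⟨Sy, hy1, hy2, hsheet⟩ : ∃ Sy : Set (XL n × Fin 4),
      (∀ p : Mn n, p.2 ∉ Sy → y p = p) ∧ (∀ p : Mn n, p.2 ∈ Sy → (y p).2 ∈ Sy) ∧
      (∀ z ∈ Sy, z.2 ≠ 0) := by
    rcases hy with hy | hy
    · subst hy
      refine ⟨SX0 n, supp_X0.1, supp_X0.2, ?_⟩
      rintro z ⟨_, (h|h)⟩ <;> rw [h] <;> decide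
    · rw [Set.mem_singleton_iff] at hy
      subst hy
      refine ⟨SX1 n, supp_X1.1, supp_X1.2, ?_⟩
      intro z hz
      have hz' : z = (rhoL n, 3) := hz
      have h3 : z.2 = 3 := by rw [hz']
      rw [h3]
      decide
  obtain ⟨hA1, hA2⟩ := supp_conj cs.prod Lc.prod hcact (tauN n) (Stau n)
    supp_tau.1 supp_tau.2
  obtain ⟨hB1, hB2⟩ := supp_conj ds.prod Ld.prod hdact y Sy hy1 hy2
  apply commute_of_disjoint_supp _ _ _ _ hA1 hA2 hB1 hB2
  intro z hz1 hz2
  have hz1' : (Lc.prod z.1, z.2) ∈ Stau n := hz1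
  have hz2' : (Ld.prod z.1, z.2) ∈ Sy := hz2
  have h0 : z.2 = 0 := by
    rcases hz1' with h | h
    · exact congrArg Prod.snd h
    · rw [Set.mem_singleton_iff] at h
      exact congrArg Prod.snd h
  exact hsheet _ hz2' h0

end Homeo


theorem conj_one {G : Type*} [Group G] (c : G) : c⁻¹ * 1 * c = 1 := by group

open TV in
theorem normal_form_aux :
    ∃ N : ℕ, ∀ n : ℕ, N ≤ n →
      ∀ w : List (TV.Mn n ≃ₜ TV.Mn n), (∀ t ∈ w, t ∈ TV.TnSet n) →
        w.length ≤ 2 ^ (n / 2) →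
        ∃ gs a2 a3 a4 : List (TV.Mn n ≃ₜ TV.Mn n),
          gs.length = w.length ∧ a2.length = w.length ∧ a3.length = w.length ∧
          a4.length = w.length ∧
          (∀ x ∈ gs, x ∈ TV.Type1Set n ∪ {1}) ∧
          (∀ x ∈ a2, x ∈ TV.Type2Set n ∪ {1}) ∧
          (∀ x ∈ a3, x ∈ ({TV.tauN n} : Set (TV.Mn n ≃ₜ TV.Mn n)) ∪ {1}) ∧
          (∀ x ∈ a4, x ∈ TV.Type4Set n ∪ {1}) ∧
          w.prod = gs.prod * conjProd gs a2 * conjProd gs a3 * conjProd gs a4 := by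
  classical
  refine ⟨4, fun n hn w hw hlen => ?_⟩
  set g1 : (Mn n ≃ₜ Mn n) → (Mn n ≃ₜ Mn n) :=
    fun t => if t ∈ Type1Set n then t else 1 with hg1
  set s2 : (Mn n ≃ₜ Mn n) → (Mn n ≃ₜ Mn n) :=
    fun t => if t ∉ Type1Set n ∧ t ∈ Type2Set n then t else 1 with hs2
  set s3 : (Mn n ≃ₜ Mn n) → (Mn n ≃ₜ Mn n) :=
    fun t => if t ∉ Type1Set n ∧ t ∉ Type2Set n ∧ t = tauN n then t else 1 with hs3
  set s4 : (Mn n ≃ₜ Mn n) → (Mn n ≃ₜ Mn n) :=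
    fun t => if t ∉ Type1Set n ∧ t ∉ Type2Set n ∧ t ≠ tauN n then t else 1 with hs4
  have key1 : ∀ t, (s2 t * (s3 t * s4 t)) * g1 t = t := by
    intro t
    by_cases h1 : t ∈ Type1Set n
    · simp [hg1, hs2, hs3, hs4, h1]
    · by_cases h2 : t ∈ Type2Set n
      · simp [hg1, hs2, hs3, hs4, h1, h2]
      · by_cases h3 : t = tauN n
        · subst h3
          simp [hg1, hs2, hs3, hs4, h1, h2]
        · simp [hg1, hs2, hs3, hs4, h1, h2, h3]
  have hzip : ∀ v : List (Mn n ≃ₜ Mn n),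
      List.zipWith (· * ·) (List.zipWith (· * ·) (v.map s2)
        (List.zipWith (· * ·) (v.map s3) (v.map s4))) (v.map g1) = v := by
    intro v
    induction v with
    | nil => rfl
    | cons t v ih =>
      simp only [List.map_cons, List.zipWith_cons_cons, ih, key1 t]
  have hmem_gs : ∀ x ∈ w.map g1, x ∈ Type1Set n ∪ {1} := by
    intro x hx
    obtain ⟨t, _, rfl⟩ := List.mem_map.mp hx
    by_cases h1 : t ∈ Type1Set n
    · rw [hg1]; simp only [if_pos h1]; exact Or.inl h1
    · rw [hg1]; simp only [if_neg h1]; exact Or.inr rfl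
  have hmem_a2 : ∀ x ∈ w.map s2, x ∈ Type2Set n ∪ {1} := by
    intro x hx
    obtain ⟨t, _, rfl⟩ := List.mem_map.mp hx
    by_cases h : t ∉ Type1Set n ∧ t ∈ Type2Set n
    · rw [hs2]; simp only [if_pos h]; exact Or.inl h.2
    · rw [hs2]; simp only [if_neg h]; exact Or.inr rfl
  have hmem_a3 : ∀ x ∈ w.map s3, x ∈ ({tauN n} : Set (Mn n ≃ₜ Mn n)) ∪ {1} := by
    intro x hx
    obtain ⟨t, _, rfl⟩ := List.mem_map.mp hx
    by_cases h : t ∉ Type1Set n ∧ t ∉ Type2Set n ∧ t = tauN n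
    · rw [hs3]; simp only [if_pos h]; exact Or.inl h.2.2
    · rw [hs3]; simp only [if_neg h]; exact Or.inr rfl
  have hmem_a4 : ∀ x ∈ w.map s4, x ∈ Type4Set n ∪ {1} := by
    intro x hx
    obtain ⟨t, ht, rfl⟩ := List.mem_map.mp hx
    by_cases h : t ∉ Type1Set n ∧ t ∉ Type2Set n ∧ t ≠ tauN n
    · rw [hs4]; simp only [if_pos h]
      left
      rcases hw t ht with ((h1 | h2) | h3) | h4
      · exact absurd h1 h.1
      · exact absurd h2 h.2.1
      · exact absurd h3 h.2.2
      · exact h4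
    · rw [hs4]; simp only [if_neg h]; exact Or.inr rfl
  have hsubdrop : ∀ i : ℕ, ∀ t ∈ (w.map g1).drop i, t ∈ Type1Set n ∪ {1} :=
    fun i t ht => hmem_gs t (List.mem_of_mem_drop ht)
  have hdroplen : ∀ i : ℕ, ((w.map g1).drop i).length ≤ 2 ^ (n / 2) := by
    intro i
    calc ((w.map g1).drop i).length ≤ (w.map g1).length := by
          rw [List.length_drop]; omega
    _ = w.length := List.length_map _
    _ ≤ 2 ^ (n / 2) := hlen
  have H2 : ∀ x ∈ w.map s2, ∀ y ∈ List.zipWith (· * ·) (w.map s3) (w.map s4), ∀ i j : ℕ,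
      Commute ((((w.map g1).drop i).prod)⁻¹ * x * ((w.map g1).drop i).prod)
        ((((w.map g1).drop j).prod)⁻¹ * y * ((w.map g1).drop j).prod) := by
    intro x hx y hy i j
    obtain ⟨y3, hy3, y4, hy4, rfl⟩ := mem_zipWith_mul hy
    rcases hmem_a2 x hx with hx' | hx'
    · rw [show ((((w.map g1).drop j).prod)⁻¹ * (y3 * y4) * ((w.map g1).drop j).prod)
          = ((((w.map g1).drop j).prod)⁻¹ * y3 * ((w.map g1).drop j).prod) *
            ((((w.map g1).drop j).prod)⁻¹ * y4 * ((w.map g1).drop j).prod) by group]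
      apply Commute.mul_right
      · rcases hmem_a3 y3 hy3 with h3 | h3
        · rw [Set.mem_singleton_iff] at h3
          exact (conj_commute_32 (by omega) _ _ (hsubdrop j) (hsubdrop i)
            (hdroplen j) (hdroplen i) y3 (Or.inl h3) x hx').symm
        · rw [Set.mem_singleton_iff] at h3
          rw [h3, conj_one]
          exact Commute.one_right _
      · rcases hmem_a4 y4 hy4 with h4 | h4
        · exact (conj_commute_32 (by omega) _ _ (hsubdrop j) (hsubdrop i)
            (hdroplen j) (hdroplen i) y4 (Or.inr h4) x hx').symm
        · rw [Set.mem_singleton_iff] at h4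
          rw [h4, conj_one]
          exact Commute.one_right _
    · rw [Set.mem_singleton_iff] at hx'
      rw [hx', conj_one]
      exact Commute.one_left _
  have H34 : ∀ x ∈ w.map s3, ∀ y ∈ w.map s4, ∀ i j : ℕ,
      Commute ((((w.map g1).drop i).prod)⁻¹ * x * ((w.map g1).drop i).prod)
        ((((w.map g1).drop j).prod)⁻¹ * y * ((w.map g1).drop j).prod) := by
    intro x hx y hy i j
    rcases hmem_a3 x hx with hx' | hx'
    · rcases hmem_a4 y hy with hy' | hy'
      · rw [Set.mem_singleton_iff] at hx'
        rw [hx']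
        exact conj_commute_34 _ _ (hsubdrop i) (hsubdrop j) y hy'
      · rw [Set.mem_singleton_iff] at hy'
        rw [hy', conj_one]
        exact Commute.one_right _
    · rw [Set.mem_singleton_iff] at hx'
      rw [hx', conj_one]
      exact Commute.one_left _
  have hlen2 : (List.zipWith (· * ·) (w.map s3) (w.map s4)).length = w.length := by
    simp
  have hsplit2 := conjProd_split (w.map g1) (w.map s3) (w.map s4)
    (by simp) (by simp) H34
  have hsplit1 := conjProd_split (w.map g1) (w.map s2)
    (List.zipWith (· * ·) (w.map s3) (w.map s4)) (by simp) (by simp) H2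
  have hprod := prod_zipWith
    (List.zipWith (· * ·) (w.map s2) (List.zipWith (· * ·) (w.map s3) (w.map s4)))
    (w.map g1) (by simp)
  refine ⟨w.map g1, w.map s2, w.map s3, w.map s4,
    List.length_map _, List.length_map _, List.length_map _, List.length_map _,
    hmem_gs, hmem_a2, hmem_a3, hmem_a4, ?_⟩
  conv_lhs => rw [← hzip w]
  rw [hprod, hsplit1, hsplit2, ← mul_assoc, ← mul_assoc]

end NF
-- AUXEND

/-- **Normal form:** for every sufficiently large `n`, every element of `W_n` represented
by a word `w` of length `ℓ ≤ r_n = 2^⌊n/2⌋` over `T_n` can be written as `p₁p₂p₃p₄`, where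
`p₁` is represented by a word `g_1 ⋯ g_ℓ` over `S_n ∪ {1}` and, for `j ∈ {2,3,4}`,
`p_j = (a_1^{(j)})^{g_1⋯g_ℓ} (a_2^{(j)})^{g_2⋯g_ℓ} ⋯ (a_ℓ^{(j)})^{g_ℓ}` with
`a_i^{(2)} ∈ Sym(4)_{η_n}`, `a_i^{(3)} ∈ {τ_n, 1}` and `a_i^{(4)} ∈ {X₀⁽ⁿ⁾, X₁⁽ⁿ⁾, 1}`. -/
theorem normal_form :
    ∃ N : ℕ, ∀ n : ℕ, N ≤ n →
      ∀ w : List (TV.Mn n ≃ₜ TV.Mn n), (∀ t ∈ w, t ∈ TV.TnSet n) →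
        w.length ≤ 2 ^ (n / 2) →
        ∃ gs a2 a3 a4 : List (TV.Mn n ≃ₜ TV.Mn n),
          gs.length = w.length ∧ a2.length = w.length ∧ a3.length = w.length ∧
          a4.length = w.length ∧
          (∀ x ∈ gs, x ∈ TV.Type1Set n ∪ {1}) ∧
          (∀ x ∈ a2, x ∈ TV.Type2Set n ∪ {1}) ∧
          (∀ x ∈ a3, x ∈ ({TV.tauN n} : Set (TV.Mn n ≃ₜ TV.Mn n)) ∪ {1}) ∧
          (∀ x ∈ a4, x ∈ TV.Type4Set n ∪ {1}) ∧
          w.prod = gs.prod * conjProd gs a2 * conjProd gs a3 * conjProd gs a4 := by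
  exact NF.normal_form_aux

end
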